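/- Let G be a locally compact unimodular group with Haar measure λ, let C ≥ 1, and let ϱ : G → [0,∞] be a measurable function satisfying ϱ(xy) ≤ C(ϱ(x) + ϱ(y)) for all x, y ∈ G. Then for every Borel probability measure μ on G and every n ≥ 1, the weak ϱ-moment of the n-fold convolution power satisfies W(ϱ, μ^(n)) ≤ n·(2C)^(n−1)·W(ϱ, μ). -/

import Mathlib

open MeasureTheory
open scoped ENNReal NNReal

/-- Convolution of two measures on a group: the pushforward of the product measure
under multiplication. -/
noncomputable def mconv {G : Type*} [Monoid G] [MeasurableSpace G]
    (μ ν : Measure G) : Measure G :=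
  (μ.prod ν).map fun p : G × G => p.1 * p.2

/-- `n`-fold convolution power of a measure (the 0th power is the Dirac mass at the
identity). -/
noncomputable def mconvPow {G : Type*} [Monoid G] [MeasurableSpace G]
    (μ : Measure G) : ℕ → Measure G
  | 0 => Measure.dirac 1
  | n + 1 => mconv (mconvPow μ n) μ

/-- The weak `ϱ`-moment `W(ϱ, μ) = sup_{s>0} s·μ({ϱ > s})` of a measure `μ`. -/
noncomputable def weakMoment {G : Type*} [MeasurableSpace G]
    (ϱ : G → ℝ≥0∞) (μ : Measure G) : ℝ≥0∞ :=
  ⨆ (s : ℝ≥0∞) (_ : 0 < s), s * μ {x | s < ϱ x}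

/-! If `ϱ(xy) > s` then `ϱ(x) > s/2C` or `ϱ(y) > s/2C`, so for sub-probability measures
`(ν ∗ μ){ϱ > s} ≤ ν{ϱ > s/2C} + μ{ϱ > s/2C}`, i.e. `W(ϱ, ν ∗ μ) ≤ 2C (W(ϱ, ν) + W(ϱ, μ))`.
Iterating with `ν = μ^(n)` gives the recursion `a_{n+1} ≤ 2C (a_n + a_1)`, whose solution
is `a_n ≤ n (2C)^(n-1) a_1`. -/

section WeakMoment

variable {G : Type*} [MeasurableSpace G] (ϱ : G → ℝ≥0∞)

lemma mul_apply_le_weakMoment (μ : Measure G) {t : ℝ≥0∞} (ht : 0 < t) :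
    t * μ {x | t < ϱ x} ≤ weakMoment ϱ μ :=
  le_iSup₂ (f := fun s (_ : 0 < s) => s * μ {x | s < ϱ x}) t ht

lemma weakMoment_mono {μ ν : Measure G} (h : μ ≤ ν) : weakMoment ϱ μ ≤ weakMoment ϱ ν :=
  iSup₂_mono fun _ _ => mul_le_mul_right (h _) _

end WeakMoment

section Convolution

variable {G : Type*} [Monoid G] [MeasurableSpace G]

lemma mconv_apply_le_of_preimage_subset (ν μ : Measure G) {s : Set G} (hs : MeasurableSet s)
    {T : Set (G × G)} (hT : (fun p : G × G => p.1 * p.2) ⁻¹' s ⊆ T) :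
    mconv ν μ s ≤ ν.prod μ T := by
  by_cases hmul : AEMeasurable (fun p : G × G => p.1 * p.2) (ν.prod μ)
  · rw [mconv, Measure.map_apply_of_aemeasurable hmul hs]
    exact measure_mono hT
  · simp [mconv, Measure.map_of_not_aemeasurable hmul]

lemma mconv_univ_le (ν μ : Measure G) : mconv ν μ Set.univ ≤ ν Set.univ * μ Set.univ :=
  calc mconv ν μ Set.univ ≤ ν.prod μ (Set.univ ×ˢ Set.univ) :=
        mconv_apply_le_of_preimage_subset ν μ .univ (by simp)
    _ ≤ ν Set.univ * μ Set.univ := Measure.prod_prod_le _ _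

lemma mconvPow_univ_le_one (μ : Measure G) (hμ : μ Set.univ ≤ 1) (n : ℕ) :
    mconvPow μ n Set.univ ≤ 1 := by
  induction n with
  | zero => simp [mconvPow]
  | succ n ih => exact (mconv_univ_le _ μ).trans (mul_le_one' ih hμ)

/-- Without measurability of multiplication, `δ₁ ∗ μ` may vanish, hence only `≤`. -/
lemma dirac_one_mconv_le (μ : Measure G) [SFinite μ] : mconv (Measure.dirac 1) μ ≤ μ := by
  by_cases hmul : AEMeasurable (fun p : G × G => p.1 * p.2) ((Measure.dirac (1 : G)).prod μ)
  · rw [Measure.dirac_prod] at hmul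
    have hid : hmul.mk _ ∘ Prod.mk (1 : G) =ᵐ[μ] id := by
      filter_upwards [ae_of_ae_map measurable_prodMk_left.aemeasurable hmul.ae_eq_mk] with y hy
      simp [← hy]
    rw [mconv, Measure.dirac_prod, Measure.map_congr hmul.ae_eq_mk,
      Measure.map_map hmul.measurable_mk measurable_prodMk_left, Measure.map_congr hid,
      Measure.map_id]
  · simp only [mconv, Measure.map_of_not_aemeasurable hmul, Measure.zero_le]

end Convolution

section QuasiSubadditive

variable {G : Type*} [Monoid G] {ϱ : G → ℝ≥0∞} {C : ℝ≥0}

lemma mul_preimage_superlevel_subset (hsub : ∀ x y : G, ϱ (x * y) ≤ C * (ϱ x + ϱ y))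
    (t : ℝ≥0∞) :
    (fun p : G × G => p.1 * p.2) ⁻¹' {x | 2 * C * t < ϱ x} ⊆
      {x | t < ϱ x} ×ˢ Set.univ ∪ Set.univ ×ˢ {x | t < ϱ x} := by
  rintro ⟨x, y⟩ hxy
  by_contra! h
  simp only [Set.mem_union, Set.mem_prod, Set.mem_ofPred_eq, Set.mem_univ, and_true,
    true_and, not_or, not_lt] at h
  refine (hsub x y).not_gt (hxy.trans_le' ?_)
  calc (C : ℝ≥0∞) * (ϱ x + ϱ y) ≤ C * (t + t) := by gcongr; exacts [h.1, h.2]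
    _ = 2 * C * t := by ring

lemma weakMoment_mconv_le [MeasurableSpace G] (hC : C ≠ 0) (hϱ : Measurable ϱ)
    (hsub : ∀ x y : G, ϱ (x * y) ≤ C * (ϱ x + ϱ y))
    {ν μ : Measure G} (hν : ν Set.univ ≤ 1) (hμ : μ Set.univ ≤ 1) :
    weakMoment ϱ (mconv ν μ) ≤ 2 * C * (weakMoment ϱ ν + weakMoment ϱ μ) := by
  refine iSup₂_le fun s hs => ?_
  have h2C0 : (2 * C : ℝ≥0∞) ≠ 0 := by simpa using hC
  have h2Ctop : (2 * C : ℝ≥0∞) ≠ ∞ := ENNReal.mul_ne_top (by simp) ENNReal.coe_ne_top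
  set t := s / (2 * C)
  have hts : 2 * C * t = s := ENNReal.mul_div_cancel h2C0 h2Ctop
  have ht : 0 < t := ENNReal.div_pos hs.ne' h2Ctop
  set A := {x | t < ϱ x}
  have hconv : mconv ν μ {x | s < ϱ x} ≤ ν A + μ A := by
    rw [← hts]
    calc mconv ν μ {x | 2 * C * t < ϱ x}
        ≤ ν.prod μ (A ×ˢ Set.univ ∪ Set.univ ×ˢ A) :=
          mconv_apply_le_of_preimage_subset ν μ (measurableSet_lt measurable_const hϱ)
            (mul_preimage_superlevel_subset hsub t)
      _ ≤ ν A * μ Set.univ + ν Set.univ * μ A :=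
          (measure_union_le _ _).trans
            (add_le_add (Measure.prod_prod_le _ _) (Measure.prod_prod_le _ _))
      _ ≤ ν A + μ A := by
          gcongr
          · exact mul_le_of_le_one_right' hμ
          · exact mul_le_of_le_one_left' hν
  calc s * mconv ν μ {x | s < ϱ x} ≤ 2 * C * t * (ν A + μ A) := by rw [hts]; gcongr
    _ = 2 * C * (t * ν A + t * μ A) := by ring
    _ ≤ 2 * C * (weakMoment ϱ ν + weakMoment ϱ μ) := by
        gcongr <;> exact mul_apply_le_weakMoment ϱ _ ht

end QuasiSubadditive

lemma ENNReal.le_nat_mul_pow_mul_of_le_mul_add {a : ℕ → ℝ≥0∞} {K w : ℝ≥0∞} (hK : 1 ≤ K)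
    (h₁ : a 1 ≤ w) (hsucc : ∀ n, 1 ≤ n → a (n + 1) ≤ K * (a n + w)) {n : ℕ} (hn : 1 ≤ n) :
    a n ≤ n * K ^ (n - 1) * w := by
  induction n, hn using Nat.le_induction with
  | base => simpa using h₁
  | succ n hn ih =>
    obtain ⟨m, rfl⟩ := Nat.exists_eq_add_of_le' hn
    calc a (m + 1 + 1) ≤ K * ((m + 1) * K ^ m * w + w) := by
          simpa using (hsucc _ hn).trans (by gcongr; simpa using ih)
      _ = (m + 1) * K ^ (m + 1) * w + K * w := by ring
      _ ≤ (m + 1) * K ^ (m + 1) * w + K ^ (m + 1) * w := by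
          gcongr; exact le_self_pow₀ hK (by omega)
      _ = ((m + 1 + 1 : ℕ) : ℝ≥0∞) * K ^ (m + 1 + 1 - 1) * w := by push_cast; ring_nf

theorem convPow_weakMoment_le_general
    {G : Type*} [Group G] [MeasurableSpace G]
    (C : ℝ≥0) (hC : 1 ≤ C)
    (ϱ : G → ℝ≥0∞) (hϱ : Measurable ϱ)
    (hsub : ∀ x y : G, ϱ (x * y) ≤ (C : ℝ≥0∞) * (ϱ x + ϱ y))
    (μ : Measure G) [IsProbabilityMeasure μ]
    (n : ℕ) (hn : 1 ≤ n) :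
    weakMoment ϱ (mconvPow μ n) ≤ (n : ℝ≥0∞) * (2 * (C : ℝ≥0∞)) ^ (n - 1) * weakMoment ϱ μ := by
  have hC₀ : C ≠ 0 := (zero_lt_one.trans_le hC).ne'
  have h2C : (1 : ℝ≥0∞) ≤ 2 * C :=
    le_mul_of_one_le_of_le one_le_two (by exact_mod_cast hC)
  refine ENNReal.le_nat_mul_pow_mul_of_le_mul_add
    (a := fun m => weakMoment ϱ (mconvPow μ m)) h2C
    (weakMoment_mono ϱ (dirac_one_mconv_le μ)) (fun m _ => ?_) hn
  exact weakMoment_mconv_le hC₀ hϱ hsub (mconvPow_univ_le_one μ measure_univ.le m)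
    measure_univ.le

/-- On a locally compact unimodular group, if `ϱ(xy) ≤ C(ϱ(x)+ϱ(y))`, then
for every probability measure `μ` and `n ≥ 1`, `W(ϱ, μ^(n)) ≤ n (2C)^(n-1) W(ϱ, μ)`. -/
theorem convPow_weakMoment_le
    {G : Type*} [TopologicalSpace G] [Group G] [IsTopologicalGroup G]
    [LocallyCompactSpace G] [MeasurableSpace G] [BorelSpace G]
    (lam : Measure G) [lam.IsHaarMeasure] [lam.IsMulRightInvariant]
    (C : ℝ≥0) (hC : 1 ≤ C)
    (ϱ : G → ℝ≥0∞) (hϱ : Measurable ϱ)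
    (hsub : ∀ x y : G, ϱ (x * y) ≤ (C : ℝ≥0∞) * (ϱ x + ϱ y))
    (μ : Measure G) [IsProbabilityMeasure μ]
    (n : ℕ) (hn : 1 ≤ n) :
    weakMoment ϱ (mconvPow μ n) ≤ (n : ℝ≥0∞) * (2 * (C : ℝ≥0∞)) ^ (n - 1) * weakMoment ϱ μ :=
  convPow_weakMoment_le_general C hC ϱ hϱ hsub μ n hn
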